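/- (Improved two-sided L₂-error bound) Let Σ₁, Σ₂ ∈ ℝ^{p×p} be symmetric with Λ(k; Σ₂) > 0, Γ₁, Γ₂ ∈ ℝ^p, and suppose RIP(k, Σ₁ − Σ₂) ≤ Λ(k; Σ₂)/2. Then for all M ∈ 𝓜(k), (1/2) ‖[Σ₂(M)]^{-1}(Γ₁(M) − Σ₁(M) β_M(Σ₂, Γ₂))‖₂ ≤ ‖β_M(Σ₁, Γ₁) − β_M(Σ₂, Γ₂)‖₂ ≤ 2 ‖[Σ₂(M)]^{-1}(Γ₁(M) − Σ₁(M) β_M(Σ₂, Γ₂))‖₂. -/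

import Mathlib

/-!
On a model `M` put `A = Σ₂(M)` and `B = Σ₁(M)`. The definition of `Λ := Λ(k; Σ₂)`, tested on
zero extensions of vectors on `M`, makes `A` coercive with constant `Λ`; the RIP hypothesis gives
`‖B - A‖_op ≤ Λ/2`, so `B` is coercive with constant `Λ/2`, hence invertible.
For `δ = β_M(Σ₁, Γ₁) - β_M(Σ₂, Γ₂)` we have `Bδ = Γ₁(M) - Bβ_M(Σ₂, Γ₂)`, so the vector
`d := A⁻¹(Γ₁(M) - Bβ_M(Σ₂, Γ₂))` satisfies `d - δ = A⁻¹(B - A)δ`, whence `‖d - δ‖ ≤ ‖δ‖/2`,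
and the triangle inequality yields both bounds.
-/

open scoped BigOperators
open MeasureTheory ProbabilityTheory Real Matrix

noncomputable section

/-- The Euclidean (`ℓ₂`) norm of a finitely indexed real vector. -/
def norm2 {ι : Type*} [Fintype ι] (v : ι → ℝ) : ℝ := Real.sqrt (∑ i, (v i) ^ 2)

/-- The `ℓ₁` norm of a finitely indexed real vector. -/
def norm1 {ι : Type*} [Fintype ι] (v : ι → ℝ) : ℝ := ∑ i, |v i|

/-- The `ℓ₂ → ℓ₂` operator norm of a square real matrix. -/
def opNorm {ι : Type*} [Fintype ι] (A : Matrix ι ι ℝ) : ℝ :=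
  sSup {r | ∃ x : ι → ℝ, norm2 x ≤ 1 ∧ r = norm2 (A.mulVec x)}

/-- The collection of models: nonempty subsets of `{1, …, p}` of cardinality at most `k`. -/
def Models (p k : ℕ) : Set (Finset (Fin p)) := {M | 1 ≤ M.card ∧ M.card ≤ k}

/-- The subvector of `v` with indices in the model `M`. -/
def subv {p : ℕ} (v : Fin p → ℝ) (M : Finset (Fin p)) : {x // x ∈ M} → ℝ := fun i => v i.1

/-- The submatrix of `A` with row and column indices in the model `M`. -/
def subm {p : ℕ} (A : Matrix (Fin p) (Fin p) ℝ) (M : Finset (Fin p)) :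
    Matrix {x // x ∈ M} {x // x ∈ M} ℝ := fun i j => A i.1 j.1

/-- `RIP(k, A)`: the maximal `k`-sparse operator norm `sup_{M ∈ 𝓜(k)} ‖A(M)‖_op`. -/
def RIP {p : ℕ} (k : ℕ) (A : Matrix (Fin p) (Fin p) ℝ) : ℝ :=
  ⨆ M : Models p k, opNorm (subm A M.1)

/-- `𝒟(k, v) = sup_{M ∈ 𝓜(k)} ‖v(M)‖₂`. -/
def Dnorm {p : ℕ} (k : ℕ) (v : Fin p → ℝ) : ℝ :=
  ⨆ M : Models p k, norm2 (subv v M.1)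

/-- `θ` has at most `k` nonzero coordinates. -/
def sparse {p : ℕ} (k : ℕ) (θ : Fin p → ℝ) : Prop := Set.ncard {j | θ j ≠ 0} ≤ k

/-- The minimal `k`-sparse eigenvalue
`Λ(k; A) = inf{θᵀAθ/‖θ‖₂² : θ ≠ 0, θ k-sparse}`. -/
def Lam {p : ℕ} (k : ℕ) (A : Matrix (Fin p) (Fin p) ℝ) : ℝ :=
  sInf {r | ∃ θ : Fin p → ℝ, θ ≠ 0 ∧ sparse k θ ∧ r = θ ⬝ᵥ A.mulVec θ / norm2 θ ^ 2}

/-- The linear regression map `β_M(Σ, Γ) = (Σ(M))⁻¹ Γ(M)`. -/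
def betaM {p : ℕ} (M : Finset (Fin p)) (S : Matrix (Fin p) (Fin p) ℝ) (G : Fin p → ℝ) :
    {x // x ∈ M} → ℝ := (subm S M)⁻¹.mulVec (subv G M)

/-- `S_{2,k}(Σ, Γ) = sup_{M ∈ 𝓜(k)} ‖β_M(Σ, Γ)‖₂`. -/
def S2k {p : ℕ} (k : ℕ) (S : Matrix (Fin p) (Fin p) ℝ) (G : Fin p → ℝ) : ℝ :=
  ⨆ M : Models p k, norm2 (betaM M.1 S G)

/-- `S_{1,k}(Σ, Γ) = sup_{M ∈ 𝓜(k)} ‖β_M(Σ, Γ)‖₁`. -/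
def S1k {p : ℕ} (k : ℕ) (S : Matrix (Fin p) (Fin p) ℝ) (G : Fin p → ℝ) : ℝ :=
  ⨆ M : Models p k, norm1 (betaM M.1 S G)

/-- The `k`-sparse Euclidean unit ball `Θ_k ⊆ ℝ^p`. -/
def Theta (p k : ℕ) : Set (Fin p → ℝ) := {θ | sparse k θ ∧ norm2 θ ≤ 1}

/-- The elementwise maximum norm `|||A|||_∞` of a matrix. -/
def normInfMat {p : ℕ} (A : Matrix (Fin p) (Fin p) ℝ) : ℝ :=
  ⨆ q : Fin p × Fin p, |A q.1 q.2|

/-- The supremum norm `‖v‖_∞` of a vector. -/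
def normInfVec {p : ℕ} (v : Fin p → ℝ) : ℝ := ⨆ j, |v j|


section Norm2

variable {ι : Type*} [Fintype ι]

lemma norm2_eq_norm_toLp (v : ι → ℝ) : norm2 v = ‖WithLp.toLp 2 v‖ := by
  simp [norm2, EuclideanSpace.norm_eq, sq_abs]

lemma norm2_nonneg (v : ι → ℝ) : 0 ≤ norm2 v := Real.sqrt_nonneg _

lemma norm2_pos {v : ι → ℝ} (hv : v ≠ 0) : 0 < norm2 v := by
  rw [norm2_eq_norm_toLp, norm_pos_iff]
  exact fun h => hv (by simpa using congrArg WithLp.ofLp h)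

lemma norm2_smul (c : ℝ) (v : ι → ℝ) : norm2 (c • v) = |c| * norm2 v := by
  rw [norm2_eq_norm_toLp, norm2_eq_norm_toLp, WithLp.toLp_smul, norm_smul, Real.norm_eq_abs]

lemma abs_norm2_sub_norm2_le (a b : ι → ℝ) : |norm2 a - norm2 b| ≤ norm2 (a - b) := by
  simpa only [norm2_eq_norm_toLp, WithLp.toLp_sub] using abs_norm_sub_norm_le _ _

lemma abs_dotProduct_le (x y : ι → ℝ) : |x ⬝ᵥ y| ≤ norm2 x * norm2 y := by
  simpa only [norm2_eq_norm_toLp, EuclideanSpace.inner_toLp_toLp, star_trivial, dotProduct_comm y,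
    mul_comm (norm2 x)] using abs_real_inner_le_norm (WithLp.toLp 2 x) (WithLp.toLp 2 y)

lemma norm2_mulVec_le [DecidableEq ι] (A : Matrix ι ι ℝ) (x : ι → ℝ) :
    norm2 (A *ᵥ x) ≤ ‖toEuclideanCLM (𝕜 := ℝ) A‖ * norm2 x := by
  simpa only [norm2_eq_norm_toLp, toEuclideanCLM_toLp] using
    (toEuclideanCLM (𝕜 := ℝ) A).le_opNorm (WithLp.toLp 2 x)

lemma norm2_mulVec_le_opNorm [DecidableEq ι] (A : Matrix ι ι ℝ) (x : ι → ℝ) :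
    norm2 (A *ᵥ x) ≤ opNorm A * norm2 x := by
  rcases eq_or_ne x 0 with rfl | hx
  · simp [norm2]
  have hbdd : BddAbove {r | ∃ x : ι → ℝ, norm2 x ≤ 1 ∧ r = norm2 (A *ᵥ x)} := by
    refine ⟨‖toEuclideanCLM (𝕜 := ℝ) A‖, ?_⟩
    rintro r ⟨y, hy, rfl⟩
    exact (norm2_mulVec_le A y).trans (mul_le_of_le_one_right (norm_nonneg _) hy)
  have hpos := norm2_pos hx
  have hunit : norm2 ((norm2 x)⁻¹ • x) = 1 := by
    rw [norm2_smul, abs_inv, abs_of_pos hpos, inv_mul_cancel₀ hpos.ne']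
  have hle := le_csSup hbdd ⟨_, hunit.le, rfl⟩
  rw [Matrix.mulVec_smul, norm2_smul, abs_inv, abs_of_pos hpos, inv_mul_le_iff₀ hpos] at hle
  exact hle.trans_eq (mul_comm _ _)

end Norm2

section Coercive

variable {ι : Type*} [Fintype ι] {A B : Matrix ι ι ℝ} {c ε : ℝ}

lemma coercive_of_perturbation (hA : ∀ x, c * norm2 x ^ 2 ≤ x ⬝ᵥ A *ᵥ x)
    (hBA : ∀ x, norm2 ((B - A) *ᵥ x) ≤ ε * norm2 x) (x : ι → ℝ) :
    (c - ε) * norm2 x ^ 2 ≤ x ⬝ᵥ B *ᵥ x := by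
  have hsplit : x ⬝ᵥ B *ᵥ x = x ⬝ᵥ A *ᵥ x + x ⬝ᵥ (B - A) *ᵥ x := by
    rw [Matrix.sub_mulVec, dotProduct_sub]; ring
  have hcs : |x ⬝ᵥ (B - A) *ᵥ x| ≤ norm2 x * (ε * norm2 x) :=
    (abs_dotProduct_le _ _).trans (mul_le_mul_of_nonneg_left (hBA x) (norm2_nonneg x))
  nlinarith [hA x, neg_abs_le (x ⬝ᵥ (B - A) *ᵥ x)]

variable [DecidableEq ι]

lemma isUnit_det_of_coercive (hc : 0 < c) (hA : ∀ x, c * norm2 x ^ 2 ≤ x ⬝ᵥ A *ᵥ x) :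
    IsUnit A.det := by
  refine isUnit_iff_ne_zero.mpr fun hdet => ?_
  obtain ⟨v, hv, hAv⟩ := Matrix.exists_mulVec_eq_zero_iff.mpr hdet
  have hv0 := hA v
  rw [hAv, dotProduct_zero] at hv0
  nlinarith [pow_pos (norm2_pos hv) 2]

lemma norm2_inv_mulVec_le_of_coercive (hc : 0 < c) (hA : ∀ x, c * norm2 x ^ 2 ≤ x ⬝ᵥ A *ᵥ x)
    (y : ι → ℝ) : norm2 (A⁻¹ *ᵥ y) ≤ c⁻¹ * norm2 y := by
  set x := A⁻¹ *ᵥ y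
  have hAx : A *ᵥ x = y := by
    rw [Matrix.mulVec_mulVec, Matrix.mul_nonsing_inv A (isUnit_det_of_coercive hc hA),
      Matrix.one_mulVec]
  have hcs : c * norm2 x ^ 2 ≤ norm2 x * norm2 y :=
    hAx ▸ (hA x).trans ((le_abs_self _).trans (abs_dotProduct_le _ _))
  rw [le_inv_mul_iff₀ hc]
  nlinarith [norm2_nonneg x, norm2_nonneg y]

lemma norm2_inv_mulVec_sub_sub_le (hc : 0 < c) (hεc : ε < c)
    (hA : ∀ x, c * norm2 x ^ 2 ≤ x ⬝ᵥ A *ᵥ x) (hBA : ∀ x, norm2 ((B - A) *ᵥ x) ≤ ε * norm2 x)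
    (g b : ι → ℝ) :
    norm2 (A⁻¹ *ᵥ (g - B *ᵥ b) - (B⁻¹ *ᵥ g - b)) ≤ c⁻¹ * ε * norm2 (B⁻¹ *ᵥ g - b) := by
  set δ := B⁻¹ *ᵥ g - b
  have hB := isUnit_det_of_coercive (sub_pos.mpr hεc) (coercive_of_perturbation hA hBA)
  have hBδ : g - B *ᵥ b = B *ᵥ δ := by
    rw [Matrix.mulVec_sub, Matrix.mulVec_mulVec, Matrix.mul_nonsing_inv B hB, Matrix.one_mulVec]
  clear_value δ
  have hdiff : A⁻¹ *ᵥ (g - B *ᵥ b) - δ = A⁻¹ *ᵥ ((B - A) *ᵥ δ) := by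
    rw [hBδ, Matrix.sub_mulVec, Matrix.mulVec_sub, Matrix.mulVec_mulVec δ A⁻¹ A,
      Matrix.nonsing_inv_mul A (isUnit_det_of_coercive hc hA), Matrix.one_mulVec]
  rw [hdiff, mul_assoc]
  exact (norm2_inv_mulVec_le_of_coercive hc hA _).trans
    (mul_le_mul_of_nonneg_left (hBA δ) (inv_nonneg.mpr hc.le))

lemma norm2_inv_mulVec_sub_two_sided (hc : 0 < c) (hA : ∀ x, c * norm2 x ^ 2 ≤ x ⬝ᵥ A *ᵥ x)
    (hBA : ∀ x, norm2 ((B - A) *ᵥ x) ≤ c / 2 * norm2 x) (g b : ι → ℝ) :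
    1 / 2 * norm2 (A⁻¹ *ᵥ (g - B *ᵥ b)) ≤ norm2 (B⁻¹ *ᵥ g - b) ∧
      norm2 (B⁻¹ *ᵥ g - b) ≤ 2 * norm2 (A⁻¹ *ᵥ (g - B *ᵥ b)) := by
  have h := norm2_inv_mulVec_sub_sub_le hc (half_lt_self hc) hA hBA g b
  rw [show c⁻¹ * (c / 2) = 1 / 2 by field_simp] at h
  have h' := abs_le.mp ((abs_norm2_sub_norm2_le _ _).trans h)
  constructor <;> linarith [h'.1, h'.2, norm2_nonneg (B⁻¹ *ᵥ g - b)]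

end Coercive

section Sparse

variable {p k : ℕ} (M : Finset (Fin p)) {θ : Fin p → ℝ}

lemma sum_eq_sum_coe_sort_of_support_subset {f : Fin p → ℝ} (hf : ∀ j ∉ M, f j = 0) :
    ∑ j, f j = ∑ i : M, f i := by
  rw [Finset.sum_coe_sort M f]
  exact (Finset.sum_subset (Finset.subset_univ M) fun j _ hj => hf j hj).symm

lemma exists_sparse_extension (hM : M.card ≤ k) (x : M → ℝ) :
    ∃ θ : Fin p → ℝ, sparse k θ ∧ (∀ j ∉ M, θ j = 0) ∧ subv θ M = x := by
  set θ : Fin p → ℝ := Function.extend Subtype.val x 0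
  have hout : ∀ j ∉ M, θ j = 0 := fun j hj =>
    Function.extend_apply' _ _ _ fun ⟨i, hi⟩ => hj (hi ▸ i.2)
  have hsupp : {j | θ j ≠ 0} ⊆ ↑M := fun j hj => by_contra fun hjM => hj (hout j hjM)
  refine ⟨θ, ?_, hout, funext fun i => Subtype.val_injective.extend_apply _ _ i⟩
  exact (Set.ncard_le_ncard hsupp M.finite_toSet).trans ((Set.ncard_coe_finset M).trans_le hM)

lemma norm2_subv_of_support_subset (hθ : ∀ j ∉ M, θ j = 0) : norm2 (subv θ M) = norm2 θ := by
  rw [norm2, norm2, sum_eq_sum_coe_sort_of_support_subset M (f := fun j => θ j ^ 2)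
    fun j hj => by simp [hθ j hj]]
  rfl

lemma dotProduct_mulVec_subv_of_support_subset (A : Matrix (Fin p) (Fin p) ℝ)
    (hθ : ∀ j ∉ M, θ j = 0) : subv θ M ⬝ᵥ subm A M *ᵥ subv θ M = θ ⬝ᵥ A *ᵥ θ := by
  have hmul : subm A M *ᵥ subv θ M = subv (A *ᵥ θ) M := funext fun i => by
    rw [Matrix.mulVec, dotProduct, subv, Matrix.mulVec, dotProduct,
      sum_eq_sum_coe_sort_of_support_subset M fun j hj => by simp [hθ j hj]]
    rfl
  rw [hmul, dotProduct, dotProduct,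
    sum_eq_sum_coe_sort_of_support_subset M fun j hj => by simp [hθ j hj]]
  rfl

lemma Lam_le (A : Matrix (Fin p) (Fin p) ℝ) (hθ : θ ≠ 0) (hs : sparse k θ) :
    Lam k A ≤ θ ⬝ᵥ A *ᵥ θ / norm2 θ ^ 2 := by
  refine csInf_le ⟨-‖toEuclideanCLM (𝕜 := ℝ) A‖, ?_⟩ ⟨θ, hθ, hs, rfl⟩
  rintro r ⟨φ, hφ, -, rfl⟩
  rw [le_div_iff₀ (pow_pos (norm2_pos hφ) 2)]
  have hcs := (abs_dotProduct_le φ (A *ᵥ φ)).trans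
    (mul_le_mul_of_nonneg_left (norm2_mulVec_le A φ) (norm2_nonneg φ))
  nlinarith [neg_abs_le (φ ⬝ᵥ A *ᵥ φ)]

lemma Lam_mul_norm2_sq_le (A : Matrix (Fin p) (Fin p) ℝ) (hs : sparse k θ) :
    Lam k A * norm2 θ ^ 2 ≤ θ ⬝ᵥ A *ᵥ θ := by
  rcases eq_or_ne θ 0 with rfl | hθ
  · simp [norm2]
  exact (le_div_iff₀ (pow_pos (norm2_pos hθ) 2)).mp (Lam_le A hθ hs)

lemma Lam_mul_norm2_sq_le_subm (A : Matrix (Fin p) (Fin p) ℝ) (hM : M.card ≤ k) (x : M → ℝ) :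
    Lam k A * norm2 x ^ 2 ≤ x ⬝ᵥ subm A M *ᵥ x := by
  obtain ⟨θ, hs, hθ, rfl⟩ := exists_sparse_extension M hM x
  rw [norm2_subv_of_support_subset M hθ, dotProduct_mulVec_subv_of_support_subset M A hθ]
  exact Lam_mul_norm2_sq_le A hs

lemma opNorm_subm_le_RIP (A : Matrix (Fin p) (Fin p) ℝ) (hM : M ∈ Models p k) :
    opNorm (subm A M) ≤ RIP k A :=
  le_ciSup (f := fun N : Models p k => opNorm (subm A N)) (Set.finite_range _).bddAbove ⟨M, hM⟩

end Sparse

theorem stmt9_general {p : ℕ} (k : ℕ)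
    (Sig1 Sig2 : Matrix (Fin p) (Fin p) ℝ)
    (G1 G2 : Fin p → ℝ)
    (hLam : 0 < Lam k Sig2)
    (hRIP : RIP k (Sig1 - Sig2) ≤ Lam k Sig2 / 2) :
    ∀ M ∈ Models p k,
      (1 / 2) * norm2 ((subm Sig2 M)⁻¹.mulVec
          (subv G1 M - (subm Sig1 M).mulVec (betaM M Sig2 G2))) ≤
        norm2 (betaM M Sig1 G1 - betaM M Sig2 G2) ∧
      norm2 (betaM M Sig1 G1 - betaM M Sig2 G2) ≤
        2 * norm2 ((subm Sig2 M)⁻¹.mulVec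
          (subv G1 M - (subm Sig1 M).mulVec (betaM M Sig2 G2))) := by
  intro M hM
  have hE : ∀ x, norm2 ((subm Sig1 M - subm Sig2 M) *ᵥ x) ≤ Lam k Sig2 / 2 * norm2 x := fun x =>
    (norm2_mulVec_le_opNorm (subm (Sig1 - Sig2) M) x).trans
      (mul_le_mul_of_nonneg_right ((opNorm_subm_le_RIP M _ hM).trans hRIP) (norm2_nonneg x))
  exact norm2_inv_mulVec_sub_two_sided hLam (Lam_mul_norm2_sq_le_subm M Sig2 hM.2) hE
    (subv G1 M) (betaM M Sig2 G2)

/-- Improved two-sided `L₂`-error bound: if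
`RIP(k, Σ₁ − Σ₂) ≤ Λ(k; Σ₂)/2` then for all `M ∈ 𝓜(k)`,
`(1/2)‖(Σ₂(M))⁻¹(Γ₁(M) − Σ₁(M)β_M(Σ₂,Γ₂))‖₂ ≤ ‖β_M(Σ₁,Γ₁) − β_M(Σ₂,Γ₂)‖₂
  ≤ 2‖(Σ₂(M))⁻¹(Γ₁(M) − Σ₁(M)β_M(Σ₂,Γ₂))‖₂`. -/
theorem stmt9 {p : ℕ} (k : ℕ) (hk : 1 ≤ k)
    (Sig1 Sig2 : Matrix (Fin p) (Fin p) ℝ) (hS1 : Sig1.IsSymm) (hS2 : Sig2.IsSymm)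
    (G1 G2 : Fin p → ℝ)
    (hLam : 0 < Lam k Sig2)
    (hRIP : RIP k (Sig1 - Sig2) ≤ Lam k Sig2 / 2) :
    ∀ M ∈ Models p k,
      (1 / 2) * norm2 ((subm Sig2 M)⁻¹.mulVec
          (subv G1 M - (subm Sig1 M).mulVec (betaM M Sig2 G2))) ≤
        norm2 (betaM M Sig1 G1 - betaM M Sig2 G2) ∧
      norm2 (betaM M Sig1 G1 - betaM M Sig2 G2) ≤
        2 * norm2 ((subm Sig2 M)⁻¹.mulVec
          (subv G1 M - (subm Sig1 M).mulVec (betaM M Sig2 G2))) :=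
  stmt9_general k Sig1 Sig2 G1 G2 hLam hRIP
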